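/- For every δ ∈ (0,1), the potential F_δ(r) = F_δ^obs(r) + (1−r²)/2 satisfies assumptions (A1)-(A2) with q = 1: there exists β₀ ∈ ℝ with F_δ(r) ≥ β₀ for all r ∈ ℝ; F₁ := F_δ^obs is twice continuously differentiable, nonnegative and convex; F₂(r) := (1−r²)/2 is twice continuously differentiable with |F₂'(r)| = |r|; and there exist constants α > 0 and β ≥ 0 (depending on δ) such that for all r ∈ ℝ: |φ_δ^obs(r)| ≤ α·|r| + β, |φ_δ^obs(r)| ≤ α·F_δ^obs(r) + β, and |r·φ_δ^obs(r)| ≤ α·F_δ^obs(r) + β. -/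

import Mathlib

/-!
Write `t₊ = max t 0`. Then `F_δ^obs(r) = ψ(r - 1) + ψ(-r - 1)` for the one-sided profile
`ψ(s) = (s₊³ - (s - δ)₊³) / (6δ²)`. Since `t ↦ t₊³` is `C²` with `(t₊³)'' = 6 t₊`, the
profile is `C²` with `ψ'' = (s₊ - (s - δ)₊) / δ² ≥ 0`, which gives smoothness and convexity.

At most one of `ψ(r - 1)`, `ψ(-r - 1)` is nonzero, so `F_δ^obs(r) = ψ(|r| - 1)` and
`|φ_δ^obs(r)| = ψ'(|r| - 1)`. The growth estimates then follow from `ψ'(s) ≤ s₊ / δ` and the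
Euler-type inequality `s ψ'(s) ≤ 3 ψ(s)`, and the lower bound from
`ψ(s) ≥ (s - δ)₊² / (2δ)`, whose coefficient `1/(2δ)` beats the `r²/2` of `F₂` when `δ < 1`.
-/

open Real Set

/-- The regularized double obstacle potential `F_δ^obs`. -/
noncomputable def Fobsδ (δ : ℝ) (r : ℝ) : ℝ :=
  if 1 + δ ≤ r then (1/(2*δ)) * (r - (1 + δ/2))^2 + δ/24
  else if 1 < r then (1/(6*δ^2)) * (r - 1)^3
  else if -1 ≤ r then 0
  else if -1 - δ < r then -(1/(6*δ^2)) * (r + 1)^3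
  else (1/(2*δ)) * (r + (1 + δ/2))^2 + δ/24

open Filter Topology

theorem hasDerivAt_max_zero_pow (n : ℕ) (x : ℝ) :
    HasDerivAt (fun t : ℝ => max t 0 ^ (n + 2)) ((n + 2) * max x 0 ^ (n + 1)) x := by
  have off_zero : ∀ y ≠ (0 : ℝ),
      HasDerivAt (fun t : ℝ => max t 0 ^ (n + 2)) ((n + 2) * max y 0 ^ (n + 1)) y := by
    intro y hy
    rcases hy.lt_or_gt with hy | hy
    · have hzero : (fun t : ℝ => max t 0 ^ (n + 2)) =ᶠ[𝓝 y] fun _ => 0 := by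
        filter_upwards [Iio_mem_nhds hy] with t (ht : t < _)
        simp [max_eq_right ht.le]
      simpa [max_eq_right hy.le] using (hasDerivAt_const y (0 : ℝ)).congr_of_eventuallyEq hzero
    · have hpow : (fun t : ℝ => max t 0 ^ (n + 2)) =ᶠ[𝓝 y] fun t => t ^ (n + 2) := by
        filter_upwards [Ioi_mem_nhds hy] with t (ht : _ < t)
        rw [max_eq_left ht.le]
      rw [max_eq_left hy.le]
      exact ((hasDerivAt_pow (n + 2) y).congr_of_eventuallyEq hpow).congr_deriv
        (by push_cast; ring)
  exact hasDerivAt_of_hasDerivAt_of_ne' (x := 0) off_zero (by fun_prop) (by fun_prop) x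

theorem contDiff_max_zero_pow (n : ℕ) : ContDiff ℝ n (fun t : ℝ => max t 0 ^ (n + 1)) := by
  induction n with
  | zero => simpa using continuous_id.max continuous_const
  | succ n ih =>
    rw [Nat.cast_succ, contDiff_succ_iff_deriv]
    refine ⟨fun x => (hasDerivAt_max_zero_pow n x).differentiableAt, by simp, ?_⟩
    rw [funext fun x => (hasDerivAt_max_zero_pow n x).deriv]
    exact contDiff_const.mul ih

theorem mul_max_zero_sq (t : ℝ) : t * max t 0 ^ 2 = max t 0 ^ 3 := by
  rcases le_total t 0 with h | h
  · simp [max_eq_right h]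
  · rw [max_eq_left h]
    ring

noncomputable def obsProfile (δ s : ℝ) : ℝ :=
  (max s 0 ^ 3 - max (s - δ) 0 ^ 3) / (6 * δ ^ 2)

noncomputable def obsProfileDeriv (δ s : ℝ) : ℝ :=
  (max s 0 ^ 2 - max (s - δ) 0 ^ 2) / (2 * δ ^ 2)

theorem hasDerivAt_obsProfile (δ s : ℝ) : HasDerivAt (obsProfile δ) (obsProfileDeriv δ s) s := by
  have h := ((hasDerivAt_max_zero_pow 1 s).sub
    ((hasDerivAt_max_zero_pow 1 (s - δ)).comp s ((hasDerivAt_id s).sub_const δ))).div_const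
    (6 * δ ^ 2)
  refine h.congr_deriv ?_
  simp only [obsProfileDeriv]
  field_simp
  ring

theorem hasDerivAt_obsProfileDeriv (δ s : ℝ) :
    HasDerivAt (obsProfileDeriv δ) ((max s 0 - max (s - δ) 0) / δ ^ 2) s := by
  have h := ((hasDerivAt_max_zero_pow 0 s).sub
    ((hasDerivAt_max_zero_pow 0 (s - δ)).comp s ((hasDerivAt_id s).sub_const δ))).div_const
    (2 * δ ^ 2)
  refine h.congr_deriv ?_
  field_simp
  ring

theorem contDiff_obsProfile (δ : ℝ) : ContDiff ℝ 2 (obsProfile δ) :=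
  ((contDiff_max_zero_pow 2).sub ((contDiff_max_zero_pow 2).comp
    (contDiff_id.sub contDiff_const))).div_const _

section obsProfile

variable {δ : ℝ}

theorem monotone_obsProfileDeriv (hδ : 0 ≤ δ) : Monotone (obsProfileDeriv δ) := by
  refine monotone_of_deriv_nonneg
    (fun s => (hasDerivAt_obsProfileDeriv δ s).differentiableAt) fun s => ?_
  rw [(hasDerivAt_obsProfileDeriv δ s).deriv]
  exact div_nonneg (sub_nonneg.2 (max_le_max_right 0 (by linarith))) (sq_nonneg δ)

theorem obsProfile_of_nonpos {s : ℝ} (hδ : 0 ≤ δ) (hs : s ≤ 0) : obsProfile δ s = 0 := by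
  simp [obsProfile, max_eq_right hs, max_eq_right (show s - δ ≤ 0 by linarith)]

theorem obsProfileDeriv_of_nonpos {s : ℝ} (hδ : 0 ≤ δ) (hs : s ≤ 0) :
    obsProfileDeriv δ s = 0 := by
  simp [obsProfileDeriv, max_eq_right hs, max_eq_right (show s - δ ≤ 0 by linarith)]

theorem obsProfile_of_nonneg_of_le {s : ℝ} (hs₀ : 0 ≤ s) (hsδ : s ≤ δ) :
    obsProfile δ s = (1/(6*δ^2)) * s ^ 3 := by
  simp only [obsProfile, max_eq_left hs₀, max_eq_right (show s - δ ≤ 0 by linarith)]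
  ring

theorem obsProfile_of_le {s : ℝ} (hδ : 0 < δ) (hs : δ ≤ s) :
    obsProfile δ s = (1/(2*δ)) * (s - δ/2) ^ 2 + δ/24 := by
  simp only [obsProfile, max_eq_left (show 0 ≤ s by linarith), max_eq_left (sub_nonneg.2 hs)]
  field_simp
  ring

theorem obsProfile_nonneg (hδ : 0 ≤ δ) (s : ℝ) : 0 ≤ obsProfile δ s :=
  div_nonneg (sub_nonneg.2 (pow_le_pow_left₀ (le_max_right _ _)
    (max_le_max_right 0 (by linarith)) 3)) (by positivity)

theorem obsProfileDeriv_nonneg (hδ : 0 ≤ δ) (s : ℝ) : 0 ≤ obsProfileDeriv δ s :=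
  div_nonneg (sub_nonneg.2 (pow_le_pow_left₀ (le_max_right _ _)
    (max_le_max_right 0 (by linarith)) 2)) (by positivity)

theorem sq_max_sub_div_le_obsProfile (hδ : 0 < δ) (s : ℝ) :
    max (s - δ) 0 ^ 2 / (2 * δ) ≤ obsProfile δ s := by
  rcases le_total s δ with hs | hs
  · rw [max_eq_right (by linarith)]
    simpa using obsProfile_nonneg hδ.le s
  · rw [max_eq_left (by linarith), obsProfile_of_le hδ hs, one_div_mul_eq_div]
    calc (s - δ) ^ 2 / (2 * δ) ≤ (s - δ / 2) ^ 2 / (2 * δ) := by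
          gcongr
          linarith
      _ ≤ (s - δ / 2) ^ 2 / (2 * δ) + δ / 24 := by linarith

theorem obsProfileDeriv_le (hδ : 0 < δ) (s : ℝ) : obsProfileDeriv δ s ≤ max s 0 / δ := by
  have hlip : max s 0 - max (s - δ) 0 ≤ δ := by
    have := abs_max_sub_max_le_abs s (s - δ) 0
    rw [sub_sub_cancel, abs_of_pos hδ] at this
    exact (le_abs_self _).trans this
  have hb : 0 ≤ max (s - δ) 0 := le_max_right _ _
  have hba : max (s - δ) 0 ≤ max s 0 := max_le_max_right 0 (by linarith)
  rw [obsProfileDeriv, div_le_div_iff₀ (by positivity) hδ]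
  nlinarith [mul_le_mul_of_nonneg_left hlip (add_nonneg hb (hb.trans hba))]

theorem mul_obsProfileDeriv_le (hδ : 0 ≤ δ) (s : ℝ) :
    s * obsProfileDeriv δ s ≤ 3 * obsProfile δ s := by
  have key : s * (max s 0 ^ 2 - max (s - δ) 0 ^ 2) ≤ max s 0 ^ 3 - max (s - δ) 0 ^ 3 := by
    nlinarith [mul_max_zero_sq s, mul_max_zero_sq (s - δ),
      mul_nonneg hδ (sq_nonneg (max (s - δ) 0))]
  calc s * obsProfileDeriv δ s = s * (max s 0 ^ 2 - max (s - δ) 0 ^ 2) / (2 * δ ^ 2) :=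
        mul_div_assoc' _ _ _
    _ ≤ (max s 0 ^ 3 - max (s - δ) 0 ^ 3) / (2 * δ ^ 2) := by gcongr
    _ = 3 * obsProfile δ s := by rw [obsProfile]; ring

theorem obsProfileDeriv_le_three_mul_add (hδ : 0 < δ) (s : ℝ) :
    obsProfileDeriv δ s ≤ 3 * obsProfile δ s + 1 / δ := by
  have hψ := obsProfile_nonneg hδ.le s
  have hψ' := obsProfileDeriv_nonneg hδ.le s
  rcases le_total 1 s with hs | hs
  · have : 0 < 1 / δ := by positivity
    nlinarith [mul_obsProfileDeriv_le hδ.le s]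
  · calc obsProfileDeriv δ s ≤ max s 0 / δ := obsProfileDeriv_le hδ s
      _ ≤ 1 / δ := by gcongr; exact max_le hs zero_le_one
      _ ≤ 3 * obsProfile δ s + 1 / δ := by linarith

end obsProfile

section Fobsδ

variable {δ : ℝ}

theorem Fobsδ_eq_obsProfile (hδ : 0 < δ) (r : ℝ) :
    Fobsδ δ r = obsProfile δ (r - 1) + obsProfile δ (-r - 1) := by
  unfold Fobsδ
  split_ifs
  · rw [obsProfile_of_le hδ (by linarith), obsProfile_of_nonpos hδ.le (by linarith)]
    ring
  · rw [obsProfile_of_nonneg_of_le (by linarith) (by linarith),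
      obsProfile_of_nonpos hδ.le (by linarith)]
    ring
  · rw [obsProfile_of_nonpos hδ.le (by linarith), obsProfile_of_nonpos hδ.le (by linarith)]
    ring
  · rw [obsProfile_of_nonpos hδ.le (by linarith),
      obsProfile_of_nonneg_of_le (by linarith) (by linarith)]
    ring
  · rw [obsProfile_of_nonpos hδ.le (by linarith), obsProfile_of_le hδ (by linarith)]
    ring

theorem hasDerivAt_Fobsδ (hδ : 0 < δ) (r : ℝ) :
    HasDerivAt (Fobsδ δ) (obsProfileDeriv δ (r - 1) - obsProfileDeriv δ (-r - 1)) r := by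
  rw [funext (Fobsδ_eq_obsProfile hδ)]
  have h := ((hasDerivAt_obsProfile δ (r - 1)).comp r ((hasDerivAt_id r).sub_const 1)).add
    ((hasDerivAt_obsProfile δ (-r - 1)).comp r ((hasDerivAt_neg r).sub_const 1))
  exact h.congr_deriv (by ring)

theorem contDiff_Fobsδ (hδ : 0 < δ) : ContDiff ℝ 2 (Fobsδ δ) := by
  rw [funext (Fobsδ_eq_obsProfile hδ)]
  exact ((contDiff_obsProfile δ).comp (contDiff_id.sub contDiff_const)).add
    ((contDiff_obsProfile δ).comp (contDiff_neg.sub contDiff_const))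

theorem convexOn_Fobsδ (hδ : 0 < δ) : ConvexOn ℝ univ (Fobsδ δ) := by
  refine Monotone.convexOn_univ_of_deriv (fun r => (hasDerivAt_Fobsδ hδ r).differentiableAt) ?_
  intro a b hab
  have hm := monotone_obsProfileDeriv hδ.le
  rw [(hasDerivAt_Fobsδ hδ a).deriv, (hasDerivAt_Fobsδ hδ b).deriv]
  linarith [hm (show a - 1 ≤ b - 1 by linarith), hm (show -b - 1 ≤ -a - 1 by linarith)]

theorem Fobsδ_eq_obsProfile_abs (hδ : 0 < δ) (r : ℝ) : Fobsδ δ r = obsProfile δ (|r| - 1) := by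
  rw [Fobsδ_eq_obsProfile hδ]
  rcases le_total 0 r with hr | hr
  · rw [abs_of_nonneg hr, obsProfile_of_nonpos (s := -r - 1) hδ.le (by linarith), add_zero]
  · rw [abs_of_nonpos hr, obsProfile_of_nonpos (s := r - 1) hδ.le (by linarith), zero_add]

theorem abs_deriv_Fobsδ (hδ : 0 < δ) (r : ℝ) :
    |deriv (Fobsδ δ) r| = obsProfileDeriv δ (|r| - 1) := by
  rw [(hasDerivAt_Fobsδ hδ r).deriv]
  rcases le_total 0 r with hr | hr
  · rw [abs_of_nonneg hr, obsProfileDeriv_of_nonpos (s := -r - 1) hδ.le (by linarith),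
      sub_zero, abs_of_nonneg (obsProfileDeriv_nonneg hδ.le _)]
  · rw [abs_of_nonpos hr, obsProfileDeriv_of_nonpos (s := r - 1) hδ.le (by linarith), zero_sub,
      abs_neg, abs_of_nonneg (obsProfileDeriv_nonneg hδ.le _)]

theorem Fobsδ_nonneg (hδ : 0 < δ) (r : ℝ) : 0 ≤ Fobsδ δ r :=
  Fobsδ_eq_obsProfile_abs hδ r ▸ obsProfile_nonneg hδ.le _

theorem neg_two_div_le_Fobsδ_add (hδ₀ : 0 < δ) (hδ₁ : δ < 1) (r : ℝ) :
    -2 / (1 - δ) ≤ Fobsδ δ r + (1 - r ^ 2) / 2 := by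
  have hψ := sq_max_sub_div_le_obsProfile hδ₀ (|r| - 1)
  rw [Fobsδ_eq_obsProfile_abs hδ₀, ← sq_abs r]
  have h1δ : 0 < 1 - δ := by linarith
  have htwo : -2 / (1 - δ) ≤ -2 := by
    rw [div_le_iff₀ h1δ]
    linarith
  rcases le_total (|r| - 1 - δ) 0 with hu | hu
  · have hr : |r| ^ 2 ≤ 4 := by nlinarith [abs_nonneg r]
    linarith [obsProfile_nonneg hδ₀.le (|r| - 1)]
  · set u := |r| - 1 - δ
    rw [max_eq_left hu] at hψ
    have hcs : (u + (1 + δ)) ^ 2 ≤ u ^ 2 / δ + (1 + δ) ^ 2 / (1 - δ) := by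
      rw [div_add_div _ _ hδ₀.ne' h1δ.ne', le_div_iff₀ (by positivity)]
      nlinarith [sq_nonneg ((1 - δ) * u - δ * (1 + δ))]
    have hc : (1 + δ) ^ 2 / (1 - δ) ≤ 4 / (1 - δ) := by gcongr; nlinarith
    have hr : |r| ^ 2 = (u + (1 + δ)) ^ 2 := by ring
    have : u ^ 2 / δ = 2 * (u ^ 2 / (2 * δ)) := by field_simp
    have : 4 / (1 - δ) = -2 * (-2 / (1 - δ)) := by ring
    linarith

theorem abs_deriv_Fobsδ_le_abs (hδ : 0 < δ) (r : ℝ) : |deriv (Fobsδ δ) r| ≤ |r| / δ := by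
  rw [abs_deriv_Fobsδ hδ]
  refine (obsProfileDeriv_le hδ _).trans ?_
  gcongr
  exact max_le (by linarith) (abs_nonneg r)

theorem abs_deriv_Fobsδ_le_Fobsδ (hδ : 0 < δ) (r : ℝ) :
    |deriv (Fobsδ δ) r| ≤ 3 * Fobsδ δ r + 1 / δ := by
  rw [abs_deriv_Fobsδ hδ, Fobsδ_eq_obsProfile_abs hδ]
  exact obsProfileDeriv_le_three_mul_add hδ _

theorem abs_mul_deriv_Fobsδ_le_Fobsδ (hδ : 0 < δ) (r : ℝ) :
    |r * deriv (Fobsδ δ) r| ≤ 6 * Fobsδ δ r + 1 / δ := by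
  rw [abs_mul, abs_deriv_Fobsδ hδ, Fobsδ_eq_obsProfile_abs hδ]
  have hsplit : |r| = (|r| - 1) + 1 := by ring
  rw [hsplit, add_mul, one_mul, sub_add_cancel]
  linarith [mul_obsProfileDeriv_le hδ.le (|r| - 1),
    obsProfileDeriv_le_three_mul_add hδ (|r| - 1)]

end Fobsδ

/-- For every `δ ∈ (0,1)`, `F_δ(r) = F_δ^obs(r) + (1−r²)/2` satisfies assumptions
(A1)–(A2) with `q = 1`: a lower bound `β₀`; `F₁ = F_δ^obs` is `C²`, nonnegative and
convex; `F₂(r) = (1−r²)/2` is `C²` with `|F₂'(r)| = |r|`; and `φ_δ^obs` satisfies the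
linear growth estimates with constants depending on `δ`. -/
theorem Fobsδ_satisfies_assumptions (δ : ℝ) (hδ : δ ∈ Set.Ioo (0:ℝ) 1) :
    (∃ β₀ : ℝ, ∀ r : ℝ, β₀ ≤ Fobsδ δ r + (1 - r^2)/2) ∧
    ContDiff ℝ 2 (Fobsδ δ) ∧
    (∀ r : ℝ, 0 ≤ Fobsδ δ r) ∧
    ConvexOn ℝ Set.univ (Fobsδ δ) ∧
    ContDiff ℝ 2 (fun r : ℝ => (1 - r^2)/2) ∧
    (∀ r : ℝ, |deriv (fun s : ℝ => (1 - s^2)/2) r| = |r|) ∧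
    (∃ α > (0:ℝ), ∃ β ≥ (0:ℝ), ∀ r : ℝ,
      |deriv (Fobsδ δ) r| ≤ α * |r| + β ∧
      |deriv (Fobsδ δ) r| ≤ α * Fobsδ δ r + β ∧
      |r * deriv (Fobsδ δ) r| ≤ α * Fobsδ δ r + β) := by
  obtain ⟨hδ₀, hδ₁⟩ := hδ
  have hδinv : 0 < 1 / δ := by positivity
  refine ⟨⟨_, neg_two_div_le_Fobsδ_add hδ₀ hδ₁⟩, contDiff_Fobsδ hδ₀, Fobsδ_nonneg hδ₀,
    convexOn_Fobsδ hδ₀, by fun_prop, fun r => ?_, 6 + 1 / δ, by positivity, 1 / δ, hδinv.le,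
    fun r => ⟨?_, ?_, ?_⟩⟩
  · simp [neg_div]
  · have h := abs_deriv_Fobsδ_le_abs hδ₀ r
    rw [div_eq_mul_one_div] at h
    nlinarith [abs_nonneg r]
  · nlinarith [abs_deriv_Fobsδ_le_Fobsδ hδ₀ r, Fobsδ_nonneg hδ₀ r]
  · nlinarith [abs_mul_deriv_Fobsδ_le_Fobsδ hδ₀ r, Fobsδ_nonneg hδ₀ r]
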